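/- arXiv:2409.18041 — 2 statements merged into one kernel-verified Lean document; each statement's English description precedes it below -/
import Mathlib

section
/- For all real numbers s and t with 1 ≤ t ≤ s and for every ε > 0, there exists a constant C(ε) > 0 such that for all real numbers c and d one has | |c+d|^t − |c|^t |^{s/t} ≤ ε|c|^s + C(ε)|d|^s. -/
open Real Set

/-- Chord inequality from convexity: for `0 ≤ δ ≤ 1` and `1 ≤ t`,
`(1+δ)^t ≤ 1 + (2^t - 1) * δ`. -/
lemma chord_rpow {t δ : ℝ} (ht : 1 ≤ t) (hδ0 : 0 ≤ δ) (hδ1 : δ ≤ 1) :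
    (1 + δ) ^ t ≤ 1 + (2 ^ t - 1) * δ := by
  have h := (convexOn_rpow ht).2 (by norm_num : (1:ℝ) ∈ Ici (0:ℝ))
    (by norm_num : (2:ℝ) ∈ Ici (0:ℝ)) (by linarith : (0:ℝ) ≤ 1 - δ) hδ0 (by ring)
  simp only [Real.one_rpow, smul_eq_mul] at h
  have h1 : (1 - δ) * 1 + δ * 2 = 1 + δ := by ring
  rw [h1] at h
  nlinarith [h]

/-- For all real numbers `s`, `t` with `1 ≤ t ≤ s` and every `ε > 0`, there exists a
constant `C(ε) > 0` such that for all reals `c`, `d`,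
`| |c+d|^t − |c|^t |^{s/t} ≤ ε|c|^s + C(ε)|d|^s`. -/
theorem stmt_0 (s t : ℝ) (ht : 1 ≤ t) (hts : t ≤ s) (ε : ℝ) (hε : 0 < ε) :
    ∃ C : ℝ, 0 < C ∧ ∀ c d : ℝ,
      |(|c + d| ^ t - |c| ^ t)| ^ (s / t) ≤ ε * |c| ^ s + C * |d| ^ s := by
  have ht0 : (0:ℝ) < t := lt_of_lt_of_le one_pos ht
  have hs0 : (0:ℝ) < s := lt_of_lt_of_le ht0 hts
  have hst0 : 0 < s / t := div_pos hs0 ht0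
  set K : ℝ := 2 ^ t - 1 + t with hK
  have hK0 : 0 < K := by
    have : (1:ℝ) < 2 ^ t := by
      calc (1:ℝ) = 1 ^ t := (Real.one_rpow t).symm
      _ < 2 ^ t := Real.rpow_lt_rpow (by norm_num) (by norm_num) ht0
    simp only [hK]; linarith
  set δ : ℝ := min 1 (ε ^ (t / s) / K) with hδ
  have hεts : 0 < ε ^ (t / s) := Real.rpow_pos_of_pos hε _
  have hδ0 : 0 < δ := lt_min one_pos (div_pos hεts hK0)
  have hδ1 : δ ≤ 1 := min_le_left _ _
  have hKδ : K * δ ≤ ε ^ (t / s) := by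
    have : δ ≤ ε ^ (t / s) / K := min_le_right _ _
    calc K * δ ≤ K * (ε ^ (t / s) / K) := by nlinarith
    _ = ε ^ (t / s) := by field_simp
  refine ⟨(1 + 1 / δ) ^ s, Real.rpow_pos_of_pos (by positivity) _, fun c d => ?_⟩
  have hac : (0:ℝ) ≤ |c| := abs_nonneg c
  have had : (0:ℝ) ≤ |d| := abs_nonneg d
  have hacd : (0:ℝ) ≤ |c + d| := abs_nonneg _
  -- rewrite (|c|^t)^(s/t) = |c|^s etc.
  have key : ∀ x : ℝ, 0 ≤ x → (x ^ t) ^ (s / t) = x ^ s := by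
    intro x hx
    rw [← Real.rpow_mul hx]
    congr 1
    field_simp
  by_cases hcase : |d| ≤ δ * |c|
  · -- small perturbation case
    have h1 : |c + d| ≤ (1 + δ) * |c| := by
      calc |c + d| ≤ |c| + |d| := abs_add_le _ _
      _ ≤ |c| + δ * |c| := by linarith
      _ = (1 + δ) * |c| := by ring
    have h2 : (1 - δ) * |c| ≤ |c + d| := by
      have h2' : |c| ≤ |c + d| + |d| := by
        have := abs_add_le (c + d) (-d)
        simpa using this
      nlinarith
    have hub : |c + d| ^ t - |c| ^ t ≤ K * δ * |c| ^ t := by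
      have := Real.rpow_le_rpow hacd h1 ht0.le
      rw [Real.mul_rpow (by linarith) hac] at this
      have hch := chord_rpow ht hδ0.le hδ1
      have hct : (0:ℝ) ≤ |c| ^ t := Real.rpow_nonneg hac t
      have h3 : (1 + δ) ^ t * |c| ^ t ≤ (1 + (2 ^ t - 1) * δ) * |c| ^ t :=
        mul_le_mul_of_nonneg_right hch hct
      have h4 : (1 + (2 ^ t - 1) * δ) * |c| ^ t = |c| ^ t + (2 ^ t - 1) * δ * |c| ^ t := by ring
      have hKexp : K * δ * |c| ^ t = (2 ^ t - 1) * δ * |c| ^ t + t * δ * |c| ^ t := by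
        rw [hK]; ring
      have h8 : 0 ≤ t * δ * |c| ^ t := by positivity
      linarith [this, h3, h4, hKexp, h8]
    have hlb : |c| ^ t - |c + d| ^ t ≤ K * δ * |c| ^ t := by
      have h5 : ((1 - δ) * |c|) ^ t ≤ |c + d| ^ t :=
        Real.rpow_le_rpow (by nlinarith) h2 ht0.le
      rw [Real.mul_rpow (by linarith) hac] at h5
      have hbern : 1 + t * (-δ) ≤ (1 + (-δ)) ^ t :=
        one_add_mul_self_le_rpow_one_add (by linarith) ht
      have h6 : (1 - t * δ) ≤ (1 - δ) ^ t := by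
        have : 1 + (-δ) = 1 - δ := by ring
        rw [this] at hbern; linarith
      have hct : (0:ℝ) ≤ |c| ^ t := Real.rpow_nonneg hac t
      have h7 : (1 - t * δ) * |c| ^ t ≤ (1 - δ) ^ t * |c| ^ t :=
        mul_le_mul_of_nonneg_right h6 hct
      have hKexp : K * δ * |c| ^ t = (2 ^ t - 1) * δ * |c| ^ t + t * δ * |c| ^ t := by
        rw [hK]; ring
      have h2t : (1:ℝ) ≤ 2 ^ t := by
        calc (1:ℝ) = 1 ^ t := (Real.one_rpow t).symm
        _ ≤ 2 ^ t := Real.rpow_le_rpow (by norm_num) (by norm_num) ht0.le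
      have h9 : 0 ≤ (2 ^ t - 1) * δ * |c| ^ t := by
        apply mul_nonneg (mul_nonneg (by linarith) hδ0.le) hct
      have h10 : (1 - t * δ) * |c| ^ t = |c| ^ t - t * δ * |c| ^ t := by ring
      linarith [h5, h7, hKexp, h9, h10]
    have habs : |(|c + d| ^ t - |c| ^ t)| ≤ K * δ * |c| ^ t := abs_le.2 ⟨by linarith, hub⟩
    have hKδ0 : (0:ℝ) ≤ K * δ := by positivity
    calc |(|c + d| ^ t - |c| ^ t)| ^ (s / t)
        ≤ (K * δ * |c| ^ t) ^ (s / t) :=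
          Real.rpow_le_rpow (abs_nonneg _) habs hst0.le
      _ = (K * δ) ^ (s / t) * (|c| ^ t) ^ (s / t) :=
          Real.mul_rpow hKδ0 (Real.rpow_nonneg hac t)
      _ ≤ ε * |c| ^ s := by
          rw [key _ hac]
          apply mul_le_mul_of_nonneg_right _ (Real.rpow_nonneg hac s)
          calc (K * δ) ^ (s / t) ≤ (ε ^ (t / s)) ^ (s / t) :=
                Real.rpow_le_rpow hKδ0 hKδ hst0.le
            _ = ε := by
                rw [← Real.rpow_mul hε.le]
                have : t / s * (s / t) = 1 := by field_simp
                rw [this, Real.rpow_one]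
      _ ≤ ε * |c| ^ s + (1 + 1 / δ) ^ s * |d| ^ s := by
          have : (0:ℝ) ≤ (1 + 1 / δ) ^ s * |d| ^ s := by positivity
          linarith
  · -- large perturbation case
    push_neg at hcase
    have hc : |c| ≤ |d| / δ := by
      rw [le_div_iff₀ hδ0]; nlinarith
    have h1 : |c + d| ≤ (1 + 1 / δ) * |d| := by
      calc |c + d| ≤ |c| + |d| := abs_add_le _ _
      _ ≤ |d| / δ + |d| := by linarith
      _ = (1 + 1 / δ) * |d| := by ring
    have h2 : |c| ≤ (1 + 1 / δ) * |d| := by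
      calc |c| ≤ |d| / δ := hc
      _ ≤ |d| / δ + |d| := by linarith
      _ = (1 + 1 / δ) * |d| := by ring
    have hMd : (0:ℝ) ≤ (1 + 1 / δ) * |d| := by positivity
    have habs : |(|c + d| ^ t - |c| ^ t)| ≤ ((1 + 1 / δ) * |d|) ^ t := by
      have ha : |c + d| ^ t ≤ ((1 + 1 / δ) * |d|) ^ t := Real.rpow_le_rpow hacd h1 ht0.le
      have hb : |c| ^ t ≤ ((1 + 1 / δ) * |d|) ^ t := Real.rpow_le_rpow hac h2 ht0.le
      have hca : (0:ℝ) ≤ |c + d| ^ t := Real.rpow_nonneg hacd t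
      have hcb : (0:ℝ) ≤ |c| ^ t := Real.rpow_nonneg hac t
      rw [abs_le]
      constructor <;> linarith
    calc |(|c + d| ^ t - |c| ^ t)| ^ (s / t)
        ≤ (((1 + 1 / δ) * |d|) ^ t) ^ (s / t) :=
          Real.rpow_le_rpow (abs_nonneg _) habs hst0.le
      _ = ((1 + 1 / δ) * |d|) ^ s := key _ hMd
      _ = (1 + 1 / δ) ^ s * |d| ^ s := Real.mul_rpow (by positivity) had
      _ ≤ ε * |c| ^ s + (1 + 1 / δ) ^ s * |d| ^ s := by
          have : (0:ℝ) ≤ ε * |c| ^ s := by positivity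
          linarith
end

section
/- Let N ≥ 1, let s ∈ (1, ∞) and let t satisfy 1 ≤ t ≤ s. Let (μ_n) be a sequence of measurable functions on ℝ^N that is bounded in L^s(ℝ^N) (i.e., sup_n ∫_{ℝ^N} |μ_n|^s dx < ∞) and converges almost everywhere to a function μ. Then lim_{n→∞} ∫_{ℝ^N} | |μ_n|^t − |μ_n − μ|^t − |μ|^t |^{s/t} dx = 0. -/
open MeasureTheory Filter Topology
open scoped NNReal ENNReal

/-!
Splitting `|a + b|ᵗ ≤ (1 + δ)ᵗ |a|ᵗ + (1 + δ⁻¹)ᵗ |b|ᵗ` according to which of `|a|`, `|b|`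
dominates, one gets for every `ε > 0` a constant `C_ε` with
`| |a|ᵗ - |a - b|ᵗ - |b|ᵗ |^{s/t} ≤ ε |a - b|ˢ + C_ε |b|ˢ`.
Apply this with `a = μₙ`, `b = μ`. By Fatou `μ ∈ Lˢ`, so `μₙ - μ` is bounded in `Lˢ`. The part of
the integrand above `C_ε |μ|ˢ` then has integral at most `ε sup ‖μₙ - μ‖ₛˢ`, and the part below it
tends to `0` by dominated convergence.
-/

namespace Real

theorem rpow_add_le_two_rpow_mul_rpow_add_rpow {r a b : ℝ} (hr : 0 ≤ r) (ha : 0 ≤ a)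
    (hb : 0 ≤ b) : (a + b) ^ r ≤ 2 ^ r * (a ^ r + b ^ r) := by
  wlog hab : b ≤ a generalizing a b
  · simpa only [add_comm] using this hb ha (le_of_not_ge hab)
  calc (a + b) ^ r ≤ (2 * a) ^ r := by gcongr; linarith
    _ = 2 ^ r * a ^ r := mul_rpow zero_le_two ha
    _ ≤ 2 ^ r * (a ^ r + b ^ r) := by gcongr; exact le_add_of_nonneg_right (rpow_nonneg hb r)

theorem add_rpow_le_one_add_rpow_mul_add {t a b δ : ℝ} (ht : 0 ≤ t) (ha : 0 ≤ a)
    (hb : 0 ≤ b) (hδ : 0 < δ) :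
    (a + b) ^ t ≤ (1 + δ) ^ t * a ^ t + (1 + δ⁻¹) ^ t * b ^ t := by
  rcases le_total b (δ * a) with h | h
  · calc (a + b) ^ t ≤ ((1 + δ) * a) ^ t := by gcongr; linarith
      _ = (1 + δ) ^ t * a ^ t := mul_rpow (by positivity) ha
      _ ≤ _ := le_add_of_nonneg_right (by positivity)
  · calc (a + b) ^ t ≤ ((1 + δ⁻¹) * b) ^ t := by
          gcongr
          have : a ≤ δ⁻¹ * b := by rwa [inv_mul_eq_div, le_div_iff₀' hδ]
          linarith
      _ = (1 + δ⁻¹) ^ t * b ^ t := mul_rpow (by positivity) hb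
      _ ≤ _ := le_add_of_nonneg_left (by positivity)

theorem abs_add_rpow_le {t a b δ : ℝ} (ht : 0 ≤ t) (hδ : 0 < δ) :
    |a + b| ^ t ≤ (1 + δ) ^ t * |a| ^ t + (1 + δ⁻¹) ^ t * |b| ^ t :=
  (rpow_le_rpow (abs_nonneg _) (abs_add_le a b) ht).trans
    (add_rpow_le_one_add_rpow_mul_add ht (abs_nonneg a) (abs_nonneg b) hδ)

theorem abs_abs_add_rpow_sub_abs_rpow_le {t a b δ : ℝ} (ht : 0 ≤ t) (hδ : 0 < δ) :
    |(|a + b| ^ t - |a| ^ t)| ≤ ((1 + δ) ^ t - 1) * |a| ^ t + (1 + δ⁻¹) ^ t * |b| ^ t := by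
  have hl : 1 ≤ (1 + δ) ^ t := one_le_rpow (by linarith) ht
  have hc : 0 ≤ (1 + δ⁻¹) ^ t := by positivity
  have ha : 0 ≤ |a| ^ t := by positivity
  have hb : 0 ≤ |b| ^ t := by positivity
  have hupper := abs_add_rpow_le (a := a) (b := b) ht hδ
  have hlower := abs_add_rpow_le (a := a + b) (b := -b) ht hδ
  rw [add_neg_cancel_right, abs_neg] at hlower
  rw [abs_sub_le_iff]
  constructor
  · linarith
  · nlinarith [mul_nonneg (sub_nonneg.2 hl) ha, mul_nonneg (sub_nonneg.2 hl) (mul_nonneg hc hb)]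

end Real

noncomputable def brezisLiebDefect (t a b : ℝ) : ℝ := |a| ^ t - |a - b| ^ t - |b| ^ t

theorem abs_brezisLiebDefect_rpow_le {t s a b δ : ℝ} (ht : 0 < t) (hs : 0 ≤ s) (hδ : 0 < δ) :
    |brezisLiebDefect t a b| ^ (s / t) ≤
      2 ^ (s / t) * (((1 + δ) ^ t - 1) ^ (s / t) * |a - b| ^ s
        + ((1 + δ⁻¹) ^ t + 1) ^ (s / t) * |b| ^ s) := by
  have hl : 0 ≤ (1 + δ) ^ t - 1 := sub_nonneg.2 (Real.one_le_rpow (by linarith) ht.le)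
  have hdefect : |brezisLiebDefect t a b|
      ≤ ((1 + δ) ^ t - 1) * |a - b| ^ t + ((1 + δ⁻¹) ^ t + 1) * |b| ^ t := by
    have h := Real.abs_abs_add_rpow_sub_abs_rpow_le (a := a - b) (b := b) ht.le hδ
    rw [sub_add_cancel] at h
    have hb : 0 ≤ |b| ^ t := by positivity
    calc |brezisLiebDefect t a b| ≤ |(|a| ^ t - |a - b| ^ t)| + |(|b| ^ t)| := abs_sub _ _
      _ ≤ _ := by rw [abs_of_nonneg hb]; linarith
  have hpow : ∀ x : ℝ, (|x| ^ t) ^ (s / t) = |x| ^ s := fun x => by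
    rw [← Real.rpow_mul (abs_nonneg x), mul_div_cancel₀ s ht.ne']
  calc |brezisLiebDefect t a b| ^ (s / t)
      ≤ (((1 + δ) ^ t - 1) * |a - b| ^ t + ((1 + δ⁻¹) ^ t + 1) * |b| ^ t) ^ (s / t) := by
        gcongr
    _ ≤ 2 ^ (s / t) * ((((1 + δ) ^ t - 1) * |a - b| ^ t) ^ (s / t)
          + (((1 + δ⁻¹) ^ t + 1) * |b| ^ t) ^ (s / t)) :=
        Real.rpow_add_le_two_rpow_mul_rpow_add_rpow (by positivity) (by positivity)
          (by positivity)
    _ = _ := by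
        rw [Real.mul_rpow hl (by positivity), Real.mul_rpow (by positivity) (by positivity),
          hpow, hpow]

theorem exists_abs_brezisLiebDefect_rpow_le {t s ε : ℝ} (ht : 0 < t) (hs : 0 < s)
    (hε : 0 < ε) : ∃ C, 0 ≤ C ∧ ∀ a b : ℝ,
      |brezisLiebDefect t a b| ^ (s / t) ≤ ε * |a - b| ^ s + C * |b| ^ s := by
  have hr : 0 < s / t := by positivity
  have hcoeff : Tendsto (fun δ : ℝ => 2 ^ (s / t) * ((1 + δ) ^ t - 1) ^ (s / t))
      (𝓝[>] 0) (𝓝 0) := by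
    refine tendsto_nhdsWithin_of_tendsto_nhds ?_
    have : ContinuousAt (fun δ : ℝ => 2 ^ (s / t) * ((1 + δ) ^ t - 1) ^ (s / t)) 0 := by
      fun_prop (disch := first | positivity | simp)
    simpa [Real.zero_rpow hr.ne'] using this.tendsto
  obtain ⟨δ, hδε, hδ⟩ := ((hcoeff.eventually (gt_mem_nhds hε)).and self_mem_nhdsWithin).exists
  refine ⟨2 ^ (s / t) * ((1 + δ⁻¹) ^ t + 1) ^ (s / t), by positivity, fun a b => ?_⟩
  calc _ ≤ _ := abs_brezisLiebDefect_rpow_le ht hs.le hδ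
    _ ≤ _ := by
      rw [mul_add, ← mul_assoc, ← mul_assoc]
      gcongr

theorem tendsto_abs_brezisLiebDefect_rpow {u : ℕ → ℝ} {a t r : ℝ} (ht : 0 < t) (hr : 0 < r)
    (hu : Tendsto u atTop (𝓝 a)) :
    Tendsto (fun n => |brezisLiebDefect t (u n) a| ^ r) atTop (𝓝 0) := by
  have hcont : Continuous fun x => |brezisLiebDefect t x a| ^ r := by
    unfold brezisLiebDefect
    fun_prop (disch := first | positivity | simp)
  simpa [Function.comp_def, brezisLiebDefect, Real.zero_rpow ht.ne', Real.zero_rpow hr.ne']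
    using (hcont.tendsto a).comp hu

theorem exists_ofReal_abs_brezisLiebDefect_rpow_le {t s : ℝ} {ε : ℝ≥0} (ht : 0 < t)
    (hs : 0 < s) (hε : 0 < ε) : ∃ C : ℝ≥0, ∀ a b : ℝ,
      ENNReal.ofReal (|brezisLiebDefect t a b| ^ (s / t)) ≤
        ε * ENNReal.ofReal (|a - b| ^ s) + C * ENNReal.ofReal (|b| ^ s) := by
  obtain ⟨C, hC, hle⟩ := exists_abs_brezisLiebDefect_rpow_le ht hs hε
  refine ⟨C.toNNReal, fun a b => ?_⟩
  calc ENNReal.ofReal (|brezisLiebDefect t a b| ^ (s / t))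
      ≤ ENNReal.ofReal (ε * |a - b| ^ s + C * |b| ^ s) := ENNReal.ofReal_le_ofReal (hle a b)
    _ = ε * ENNReal.ofReal (|a - b| ^ s) + C.toNNReal * ENNReal.ofReal (|b| ^ s) := by
      rw [ENNReal.ofReal_add (by positivity) (by positivity),
        ENNReal.ofReal_mul (NNReal.coe_nonneg ε), ENNReal.ofReal_mul hC,
        ENNReal.ofReal_coe_nnreal]
      rfl

section Lintegral

variable {α : Type*} [MeasurableSpace α] {μ : Measure α}

theorem lintegral_ofReal_abs_rpow_le_of_ae_tendsto {f : ℕ → α → ℝ} {g : α → ℝ} {s : ℝ}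
    {M : ℝ≥0∞} (hs : 0 ≤ s) (hf : ∀ n, Measurable (f n))
    (hlim : ∀ᵐ x ∂μ, Tendsto (fun n => f n x) atTop (𝓝 (g x)))
    (hM : ∀ n, ∫⁻ x, ENNReal.ofReal (|f n x| ^ s) ∂μ ≤ M) :
    ∫⁻ x, ENNReal.ofReal (|g x| ^ s) ∂μ ≤ M := by
  have hliminf : ∀ᵐ x ∂μ, ENNReal.ofReal (|g x| ^ s)
      = liminf (fun n => ENNReal.ofReal (|f n x| ^ s)) atTop := by
    filter_upwards [hlim] with x hx
    exact (ENNReal.tendsto_ofReal (hx.abs.rpow_const (Or.inr hs))).liminf_eq.symm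
  calc ∫⁻ x, ENNReal.ofReal (|g x| ^ s) ∂μ
      = ∫⁻ x, liminf (fun n => ENNReal.ofReal (|f n x| ^ s)) atTop ∂μ :=
        lintegral_congr_ae hliminf
    _ ≤ liminf (fun n => ∫⁻ x, ENNReal.ofReal (|f n x| ^ s) ∂μ) atTop :=
        lintegral_liminf_le fun n => by fun_prop
    _ ≤ M := liminf_le_of_frequently_le (Frequently.of_forall hM)

theorem lintegral_ofReal_abs_sub_rpow_le {f g : α → ℝ} {s : ℝ} (hs : 0 ≤ s)
    (hf : Measurable f) :
    ∫⁻ x, ENNReal.ofReal (|f x - g x| ^ s) ∂μ ≤ ENNReal.ofReal (2 ^ s) *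
      (∫⁻ x, ENNReal.ofReal (|f x| ^ s) ∂μ + ∫⁻ x, ENNReal.ofReal (|g x| ^ s) ∂μ) := by
  have hpt : ∀ x, ENNReal.ofReal (|f x - g x| ^ s)
      ≤ ENNReal.ofReal (2 ^ s) * (ENNReal.ofReal (|f x| ^ s) + ENNReal.ofReal (|g x| ^ s)) := by
    intro x
    rw [← ENNReal.ofReal_add (by positivity) (by positivity),
      ← ENNReal.ofReal_mul (by positivity)]
    refine ENNReal.ofReal_le_ofReal ?_
    calc |f x - g x| ^ s ≤ (|f x| + |g x|) ^ s := by gcongr; exact abs_sub _ _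
      _ ≤ _ := Real.rpow_add_le_two_rpow_mul_rpow_add_rpow hs (abs_nonneg _) (abs_nonneg _)
  calc ∫⁻ x, ENNReal.ofReal (|f x - g x| ^ s) ∂μ
      ≤ ∫⁻ x, ENNReal.ofReal (2 ^ s) *
          (ENNReal.ofReal (|f x| ^ s) + ENNReal.ofReal (|g x| ^ s)) ∂μ := lintegral_mono hpt
    _ = _ := by
      rw [lintegral_const_mul' _ _ ENNReal.ofReal_ne_top, lintegral_add_left (by fun_prop)]

theorem tendsto_lintegral_zero_of_le_mul_add {F G : ℕ → α → ℝ≥0∞} {H : α → ℝ≥0∞}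
    {K : ℝ≥0∞} (hK : K ≠ ∞) (hH : Measurable H) (hHfin : ∫⁻ x, H x ∂μ ≠ ∞)
    (hF : ∀ n, Measurable (F n)) (hlim : ∀ᵐ x ∂μ, Tendsto (fun n => F n x) atTop (𝓝 0))
    (hG : ∀ n, ∫⁻ x, G n x ∂μ ≤ K)
    (hdom : ∀ ε : ℝ≥0, 0 < ε → ∃ C : ℝ≥0, ∀ n x, F n x ≤ ε * G n x + C * H x) :
    Tendsto (fun n => ∫⁻ x, F n x ∂μ) atTop (𝓝 0) := by
  refine ENNReal.tendsto_nhds_zero.2 fun η hη => ?_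
  obtain ⟨ε, hε, hεK⟩ := ENNReal.exists_nnreal_pos_mul_lt hK (ENNReal.half_pos hη.ne').ne'
  obtain ⟨C, hC⟩ := hdom ε hε
  have hbelow : Tendsto (fun n => ∫⁻ x, min (F n x) (C * H x) ∂μ) atTop (𝓝 0) := by
    have hdc := tendsto_lintegral_of_dominated_convergence (fun x => C * H x)
      (fun n => (hF n).min (hH.const_mul _)) (fun n => ae_of_all _ fun x => min_le_right _ _)
      (by rw [lintegral_const_mul _ hH]; exact ENNReal.mul_ne_top ENNReal.coe_ne_top hHfin)
      (hlim.mono fun x hx => tendsto_of_tendsto_of_tendsto_of_le_of_le tendsto_const_nhds hx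
        (fun n => zero_le) (fun n => min_le_left _ _))
    simpa using hdc
  filter_upwards [ENNReal.tendsto_nhds_zero.1 hbelow (η / 2) (ENNReal.half_pos hη.ne')]
    with n hn
  have habove : ∫⁻ x, F n x - C * H x ∂μ ≤ ε * K :=
    calc ∫⁻ x, F n x - C * H x ∂μ ≤ ∫⁻ x, ε * G n x ∂μ :=
          lintegral_mono fun x => tsub_le_iff_right.2 (hC n x)
      _ = ε * ∫⁻ x, G n x ∂μ := lintegral_const_mul' _ _ ENNReal.coe_ne_top
      _ ≤ ε * K := by gcongr; exact hG n
  calc ∫⁻ x, F n x ∂μ = ∫⁻ x, F n x - C * H x ∂μ + ∫⁻ x, min (F n x) (C * H x) ∂μ := by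
        rw [← lintegral_add_right _ ((hF n).min (hH.const_mul _))]
        simp only [tsub_add_min]
    _ ≤ η / 2 + η / 2 := add_le_add (habove.trans hεK.le) hn
    _ = η := ENNReal.add_halves η

theorem tendsto_integral_zero_of_tendsto_lintegral_ofReal {f : ℕ → α → ℝ}
    (hf_nonneg : ∀ n x, 0 ≤ f n x) (hf : ∀ n, AEStronglyMeasurable (f n) μ)
    (h : Tendsto (fun n => ∫⁻ x, ENNReal.ofReal (f n x) ∂μ) atTop (𝓝 0)) :
    Tendsto (fun n => ∫ x, f n x ∂μ) atTop (𝓝 0) := by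
  have h' := (ENNReal.tendsto_toReal ENNReal.zero_ne_top).comp h
  rw [ENNReal.toReal_zero] at h'
  exact h'.congr fun n =>
    (integral_eq_lintegral_of_nonneg_ae (ae_of_all _ (hf_nonneg n)) (hf n)).symm

end Lintegral

theorem stmt_1_general (N : ℕ) (s t : ℝ) (hs : 1 < s) (ht : 1 ≤ t)
    (μn : ℕ → EuclideanSpace ℝ (Fin N) → ℝ) (μ : EuclideanSpace ℝ (Fin N) → ℝ)
    (hmeas : ∀ n, Measurable (μn n)) (hμ : Measurable μ)
    (hbdd : ∃ M : ℝ≥0, ∀ n,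
      ∫⁻ x, ENNReal.ofReal (|μn n x| ^ s) ∂volume ≤ M)
    (hae : ∀ᵐ x ∂(volume : Measure (EuclideanSpace ℝ (Fin N))),
      Tendsto (fun n => μn n x) atTop (𝓝 (μ x))) :
    Tendsto (fun n =>
        ∫ x, |(|μn n x| ^ t - |μn n x - μ x| ^ t - |μ x| ^ t)| ^ (s / t) ∂volume)
      atTop (𝓝 0) := by
  obtain ⟨M, hM⟩ := hbdd
  have ht0 : 0 < t := by linarith
  have hs0 : 0 < s := by linarith
  have hμM := lintegral_ofReal_abs_rpow_le_of_ae_tendsto hs0.le hmeas hae hM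
  have hmeasF : ∀ n, Measurable fun x => |brezisLiebDefect t (μn n x) (μ x)| ^ (s / t) :=
    fun n => by unfold brezisLiebDefect; fun_prop
  show Tendsto (fun n => ∫ x, |brezisLiebDefect t (μn n x) (μ x)| ^ (s / t)) atTop (𝓝 0)
  refine tendsto_integral_zero_of_tendsto_lintegral_ofReal (fun n x => by positivity)
    (fun n => (hmeasF n).aestronglyMeasurable) ?_
  refine tendsto_lintegral_zero_of_le_mul_add (K := ENNReal.ofReal (2 ^ s) * (M + M))
    (by finiteness) (by fun_prop) (hμM.trans_lt ENNReal.coe_lt_top).ne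
    (fun n => (hmeasF n).ennreal_ofReal) ?_
    (fun n => (lintegral_ofReal_abs_sub_rpow_le hs0.le (hmeas n)).trans
      (by gcongr; exact hM n)) fun ε hε => ?_
  · filter_upwards [hae] with x hx
    simpa using ENNReal.tendsto_ofReal (tendsto_abs_brezisLiebDefect_rpow ht0 (by positivity) hx)
  · obtain ⟨C, hC⟩ := exists_ofReal_abs_brezisLiebDefect_rpow_le ht0 hs0 hε
    exact ⟨C, fun n x => hC _ _⟩

/-- Local Brezis–Lieb lemma, first part: if `1 < s`, `1 ≤ t ≤ s`, `(μn)` is a sequence of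
measurable functions on `ℝ^N` bounded in `L^s` that converges almost everywhere to `μ`, then
`∫ | |μn|^t − |μn − μ|^t − |μ|^t |^{s/t} → 0`. -/
theorem stmt_1 (N : ℕ) (hN : 1 ≤ N) (s t : ℝ) (hs : 1 < s) (ht : 1 ≤ t) (hts : t ≤ s)
    (μn : ℕ → EuclideanSpace ℝ (Fin N) → ℝ) (μ : EuclideanSpace ℝ (Fin N) → ℝ)
    (hmeas : ∀ n, Measurable (μn n)) (hμ : Measurable μ)
    (hbdd : ∃ M : ℝ≥0, ∀ n,
      ∫⁻ x, ENNReal.ofReal (|μn n x| ^ s) ∂volume ≤ M)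
    (hae : ∀ᵐ x ∂(volume : Measure (EuclideanSpace ℝ (Fin N))),
      Tendsto (fun n => μn n x) atTop (𝓝 (μ x))) :
    Tendsto (fun n =>
        ∫ x, |(|μn n x| ^ t - |μn n x - μ x| ^ t - |μ x| ^ t)| ^ (s / t) ∂volume)
      atTop (𝓝 0) :=
  stmt_1_general N s t hs ht μn μ hmeas hμ hbdd hae
end
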